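/- Let A be an abelian category and let X, Y be chain complexes over A. For every n ∈ ℤ there are isomorphisms of abelian groups Ext^1_dw(X, Σ^{−n−1}Y) ≅ H_n(Hom(X,Y)) ≅ K(A)(X, Σ^{−n}Y), where K(A)(X, Σ^{−n}Y) is the group of chain homotopy classes of chain maps X → Σ^{−n}Y. In particular, Hom(X,Y) is exact if and only if every chain map Σ^n X → Y (for every n) is null homotopic. -/

import Mathlib

set_option linter.unusedVariables false

open CategoryTheory CategoryTheory.Limits ZeroObject

universe v u

namespace GorensteinAC





/-! ### General notions in an abelian category -/

section AbelianNotions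

variable {𝒜 : Type u} [Category.{v} 𝒜] [Abelian 𝒜]

/-- `Ext¹(X,Y) = 0`, expressed by the (Yoneda) condition that every short exact
sequence `0 → Y → Z → X → 0` splits. -/
def Ext1IsZero (X Y : 𝒜) : Prop :=
  ∀ (Z : 𝒜) (i : Y ⟶ Z) (p : Z ⟶ X) (w : i ≫ p = 0),
    (ShortComplex.mk i p w).ShortExact → ∃ s : X ⟶ Z, s ≫ p = 𝟙 X

/-- The right `Ext¹`-orthogonal of a class of objects. -/
def rightPerp (S : Set 𝒜) : Set 𝒜 := {Y | ∀ X ∈ S, Ext1IsZero X Y}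

/-- The left `Ext¹`-orthogonal of a class of objects. -/
def leftPerp (S : Set 𝒜) : Set 𝒜 := {X | ∀ Y ∈ S, Ext1IsZero X Y}

/-- `(X, Y)` is a cotorsion pair. -/
def IsCotorsionPair (X Y : Set 𝒜) : Prop := Y = rightPerp X ∧ X = leftPerp Y

/-- `(X, Y)` is a complete cotorsion pair: it is a cotorsion pair with enough
projectives and enough injectives. -/
def IsCompleteCotorsionPair (X Y : Set 𝒜) : Prop :=
  IsCotorsionPair X Y ∧
  (∀ A : 𝒜, ∃ (Y' X' : 𝒜) (i : Y' ⟶ X') (p : X' ⟶ A) (w : i ≫ p = 0),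
    (ShortComplex.mk i p w).ShortExact ∧ X' ∈ X ∧ Y' ∈ Y) ∧
  (∀ A : 𝒜, ∃ (Y' X' : 𝒜) (i : A ⟶ Y') (p : Y' ⟶ X') (w : i ≫ p = 0),
    (ShortComplex.mk i p w).ShortExact ∧ X' ∈ X ∧ Y' ∈ Y)

/-- A class is thick if it is closed under direct summands (retracts) and satisfies
the two-out-of-three property on short exact sequences. -/
def IsThick (W : Set 𝒜) : Prop :=
  (∀ A B : 𝒜, (∃ (s : A ⟶ B) (r : B ⟶ A), s ≫ r = 𝟙 A) → B ∈ W → A ∈ W) ∧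
  (∀ S : ShortComplex 𝒜, S.ShortExact →
    ((S.X₁ ∈ W → S.X₂ ∈ W → S.X₃ ∈ W) ∧ (S.X₁ ∈ W → S.X₃ ∈ W → S.X₂ ∈ W) ∧
      (S.X₂ ∈ W → S.X₃ ∈ W → S.X₁ ∈ W)))

/-- A projective cotorsion pair: a complete cotorsion pair `(C, W)` with `W` thick
and `C ∩ W` exactly the class of projective objects. -/
def IsProjectiveCotorsionPair (C W : Set 𝒜) : Prop :=
  IsCompleteCotorsionPair C W ∧ IsThick W ∧ (C ∩ W = {P : 𝒜 | Projective P})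

/-- The sphere complex `S^n(A)`: `A` concentrated in degree `n`. -/
noncomputable def sphere (n : ℤ) (A : 𝒜) : ChainComplex 𝒜 ℤ :=
  (HomologicalComplex.single 𝒜 (ComplexShape.down ℤ) n).obj A

/-- The disk complex `D^n(A)`: `A` in degrees `n` and `n-1` with identity differential. -/
noncomputable def disk (n : ℤ) (A : 𝒜) : ChainComplex 𝒜 ℤ where
  X i := if i = n ∨ i = n - 1 then A else 0
  d i j :=
    if h : i = n ∧ j = n - 1 then
      eqToHom (by (try dsimp only); rw [if_pos (Or.inl h.1), if_pos (Or.inr h.2)])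
    else 0
  shape i j hij := by
    apply dif_neg
    rintro ⟨rfl, rfl⟩
    exact hij (by simp only [ComplexShape.down_Rel]; omega)
  d_comp_d' i j k hij hjk := by
    try dsimp only
    by_cases h : i = n ∧ j = n - 1
    · rw [dif_neg (show ¬(j = n ∧ k = n - 1) by rintro ⟨rfl, -⟩; omega), comp_zero]
    · rw [dif_neg h, zero_comp]

end AbelianNotions






section AbelianNotionsB
variable {𝒜 : Type u} [Category.{v} 𝒜] [Abelian 𝒜]

/-- The complex `𝔻` remains exact after applying the contravariant functor `Hom(-, L)`. -/
def HomIntoExact (𝔻 : ChainComplex 𝒜 ℤ) (L : 𝒜) : Prop :=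
  ∀ (n : ℤ) (f : 𝔻.X n ⟶ L), 𝔻.d (n + 1) n ≫ f = 0 →
    ∃ g : 𝔻.X (n - 1) ⟶ L, f = 𝔻.d n (n - 1) ≫ g

/-- The complex `𝔻` remains exact after applying the covariant functor `Hom(A, -)`. -/
def HomFromExact (𝔻 : ChainComplex 𝒜 ℤ) (A : 𝒜) : Prop :=
  ∀ (n : ℤ) (f : A ⟶ 𝔻.X n), f ≫ 𝔻.d n (n - 1) = 0 →
    ∃ g : A ⟶ 𝔻.X (n + 1), f = g ≫ 𝔻.d (n + 1) n

end AbelianNotionsB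

abbrev Ch (R : Type) [Ring R] := ChainComplex (ModuleCat R) ℤ
abbrev DCh (R : Type) [Ring R] := ChainComplex (Ch R) ℤ

def IsTypeFPInfty {S : Type} [Ring S] (F : ModuleCat S) : Prop :=
  ∃ P : ProjectiveResolution F, ∀ n : ℕ, Module.Finite S (P.complex.X n)

/-- A module is countably generated if it has a countable generating set. -/
def IsCountablyGenerated {S : Type} [Ring S] (M : ModuleCat S) : Prop :=
  ∃ s : Set M, s.Countable ∧ Submodule.span S s = ⊤

/-- A chain complex is countably generated iff each component is countably generated. -/
def IsCountablyGeneratedCx {S : Type} [Ring S] (X : ChainComplex (ModuleCat S) ℤ) : Prop :=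
  ∀ n : ℤ, IsCountablyGenerated (X.X n)

/-- A module `M` has projective dimension at most `n` : it admits a projective
resolution vanishing above degree `n`. -/
def HasProjDimLE {S : Type} [Ring S] (M : ModuleCat S) (n : ℕ) : Prop :=
  ∃ P : ProjectiveResolution M, ∀ k : ℕ, n < k → IsZero (P.complex.X k)

/-- A module is absolutely pure (FP-injective) if `Ext¹(F, E) = 0` for every finitely
presented module `F`. -/
def IsAbsolutelyPure {S : Type} [Ring S] (E : ModuleCat S) : Prop :=
  ∀ F : ModuleCat S, Module.FinitePresentation S F → Ext1IsZero F E

/-- A module is absolutely clean if `Ext¹(F, A) = 0` for every module `F` of type `FP_∞`. -/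
def IsAbsolutelyClean {S : Type} [Ring S] (A : ModuleCat S) : Prop :=
  ∀ F : ModuleCat S, IsTypeFPInfty F → Ext1IsZero F A

/-- `M` has absolutely pure (FP-injective) dimension at most `n` : there is an exact
sequence `0 → M → E⁰ → ⋯ → Eⁿ → 0` with each `Eⁱ` absolutely pure. -/
def HasAbsPureDimLE {S : Type} [Ring S] (M : ModuleCat S) (n : ℕ) : Prop :=
  ∃ D : CochainComplex (ModuleCat S) ℕ,
    Nonempty (D.X 0 ≅ M) ∧ (∀ i : ℕ, D.ExactAt i) ∧
      (∀ i : ℕ, 1 ≤ i → IsAbsolutelyPure (D.X i)) ∧ (∀ i : ℕ, n + 1 < i → IsZero (D.X i))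

section Coherent
variable (R : Type) [Ring R]

/-- `R` is left coherent: every finitely generated left ideal is finitely presented. -/
def IsLeftCoherent : Prop :=
  ∀ I : Ideal R, I.FG → Module.FinitePresentation R I

/-- `R` is right coherent: every finitely generated right ideal is finitely presented. -/
def IsRightCoherent : Prop :=
  ∀ I : Submodule Rᵐᵒᵖ R, I.FG → Module.FinitePresentation Rᵐᵒᵖ I

/-- A Ding-Chen ring: a two-sided coherent ring with finite self-FP-injective dimension
on both sides. -/
def IsDingChen : Prop :=
  IsLeftCoherent R ∧ IsRightCoherent R ∧
    (∃ n : ℕ, HasAbsPureDimLE (ModuleCat.of R R) n) ∧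
    ∃ n : ℕ, HasAbsPureDimLE (ModuleCat.of Rᵐᵒᵖ Rᵐᵒᵖ) n

end Coherent

section Modules
variable {R : Type} [Ring R]

open TensorProduct in
noncomputable def ncRel (R : Type) [Ring R] (M : Type) [AddCommGroup M] [Module Rᵐᵒᵖ M]
    (N : Type) [AddCommGroup N] [Module R N] : AddSubgroup (TensorProduct ℤ M N) :=
  AddSubgroup.closure
    {z | ∃ (r : R) (m : M) (n : N),
      z = (MulOpposite.op r • m) ⊗ₜ[ℤ] n - m ⊗ₜ[ℤ] (r • n)}

def IsLevel (L : ModuleCat R) : Prop :=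
  ∀ (K P F : ModuleCat Rᵐᵒᵖ) (i : K ⟶ P) (p : P ⟶ F) (w : i ≫ p = 0),
    (ShortComplex.mk i p w).ShortExact → Projective P → IsTypeFPInfty F →
    ∀ z : TensorProduct ℤ K L,
      TensorProduct.map i.hom.toAddMonoidHom.toIntLinearMap (LinearMap.id (R := ℤ) (M := L)) z
        ∈ ncRel R P L → z ∈ ncRel R K L

/-- A module `L` is flat if for every monomorphism `K → P` of right modules, the
induced map `K ⊗_R L → P ⊗_R L` is injective. -/
def IsFlat (L : ModuleCat R) : Prop :=
  ∀ (K P : ModuleCat Rᵐᵒᵖ) (i : K ⟶ P), Mono i →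
    ∀ z : TensorProduct ℤ K L,
      TensorProduct.map i.hom.toAddMonoidHom.toIntLinearMap (LinearMap.id (R := ℤ) (M := L)) z
        ∈ ncRel R P L → z ∈ ncRel R K L

/-- `M` has flat dimension at most `n` : there is an exact sequence
`0 → Fₙ → ⋯ → F₀ → M → 0` with each `Fᵢ` flat. -/
def HasFlatDimLE (M : ModuleCat R) (n : ℕ) : Prop :=
  ∃ D : ChainComplex (ModuleCat R) ℕ,
    Nonempty (D.X 0 ≅ M) ∧ (∀ i : ℕ, D.ExactAt i) ∧
      (∀ i : ℕ, 1 ≤ i → IsFlat (D.X i)) ∧ (∀ i : ℕ, n + 1 < i → IsZero (D.X i))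

/-- A Gorenstein projective module: a cycle of an exact complex of projective modules
which remains exact under `Hom(-, Q)` for every projective module `Q`. -/
noncomputable def IsGorProjMod (M : ModuleCat R) : Prop :=
  ∃ D : ChainComplex (ModuleCat R) ℤ,
    (∀ n : ℤ, Projective (D.X n)) ∧ (∀ n : ℤ, D.ExactAt n) ∧
      (∀ Q : ModuleCat R, Projective Q → HomIntoExact D Q) ∧
      Nonempty (M ≅ kernel (D.d 0 (-1)))

/-- A Gorenstein injective module: a cycle of an exact complex of injective modules
which remains exact under `Hom(E, -)` for every injective module `E`. -/
noncomputable def IsGorInjMod (M : ModuleCat R) : Prop :=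
  ∃ D : ChainComplex (ModuleCat R) ℤ,
    (∀ n : ℤ, Injective (D.X n)) ∧ (∀ n : ℤ, D.ExactAt n) ∧
      (∀ E : ModuleCat R, Injective E → HomFromExact D E) ∧
      Nonempty (M ≅ kernel (D.d 0 (-1)))

end Modules

section Complexes
variable {R : Type} [Ring R]

def IsLevelComplex (L : Ch R) : Prop :=
  (∀ n : ℤ, L.ExactAt n) ∧ ∀ n : ℤ, IsLevel (L.cycles n)

/-- A flat chain complex: exact with all cycle modules flat. -/
def IsFlatComplex (F : Ch R) : Prop :=
  (∀ n : ℤ, F.ExactAt n) ∧ ∀ n : ℤ, IsFlat (F.cycles n)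

/-- An absolutely clean chain complex: exact with all cycle modules absolutely clean. -/
def IsAbsCleanComplex (A : Ch R) : Prop :=
  (∀ n : ℤ, A.ExactAt n) ∧ ∀ n : ℤ, IsAbsolutelyClean (A.cycles n)

def IsACAcyclicProjCx (𝔻 : DCh R) : Prop :=
  (∀ n : ℤ, Projective (𝔻.X n)) ∧ (∀ n : ℤ, 𝔻.ExactAt n) ∧
    ∀ L : Ch R, IsLevelComplex L → HomIntoExact 𝔻 L

noncomputable def IsGorACProj (X : Ch R) : Prop :=
  ∃ 𝔻 : DCh R, IsACAcyclicProjCx 𝔻 ∧ Nonempty (X ≅ kernel (𝔻.d 0 (-1)))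

/-- A Ding projective chain complex. -/
noncomputable def IsDingProjCx (X : Ch R) : Prop :=
  ∃ 𝔻 : DCh R,
    (∀ n : ℤ, Projective (𝔻.X n)) ∧ (∀ n : ℤ, 𝔻.ExactAt n) ∧
      (∀ F : Ch R, IsFlatComplex F → HomIntoExact 𝔻 F) ∧
      Nonempty (X ≅ kernel (𝔻.d 0 (-1)))

/-- A Gorenstein projective chain complex. -/
noncomputable def IsGorProjCx (X : Ch R) : Prop :=
  ∃ 𝔻 : DCh R,
    (∀ n : ℤ, Projective (𝔻.X n)) ∧ (∀ n : ℤ, 𝔻.ExactAt n) ∧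
      (∀ Q : Ch R, Projective Q → HomIntoExact 𝔻 Q) ∧
      Nonempty (X ≅ kernel (𝔻.d 0 (-1)))

/-- A Gorenstein AC-injective chain complex. -/
noncomputable def IsGorACInj (X : Ch R) : Prop :=
  ∃ 𝕀 : DCh R,
    (∀ n : ℤ, Injective (𝕀.X n)) ∧ (∀ n : ℤ, 𝕀.ExactAt n) ∧
      (∀ A : Ch R, IsAbsCleanComplex A → HomFromExact 𝕀 A) ∧
      Nonempty (X ≅ kernel (𝕀.d 0 (-1)))

/-- A Gorenstein injective chain complex. -/
noncomputable def IsGorInjCx (X : Ch R) : Prop :=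
  ∃ 𝕀 : DCh R,
    (∀ n : ℤ, Injective (𝕀.X n)) ∧ (∀ n : ℤ, 𝕀.ExactAt n) ∧
      (∀ E : Ch R, Injective E → HomFromExact 𝕀 E) ∧
      Nonempty (X ≅ kernel (𝕀.d 0 (-1)))

def chCard (X : Ch R) : Cardinal := Cardinal.mk (Σ n : ℤ, X.X n)

def dchCard (𝕏 : DCh R) : Cardinal := Cardinal.mk (Σ (n : ℤ) (k : ℤ), (𝕏.X n).X k)

end Complexes






variable {R : Type} [Ring R]

lemma mc_comp_apply {A B C : ModuleCat R} (f : A ⟶ B) (g : B ⟶ C) (x : A) :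
    (f ≫ g) x = g (f x) := rfl

lemma mc_zero_apply {A B : ModuleCat R} (x : A) : (0 : A ⟶ B) x = 0 := rfl

/-- A subcomplex of a chain complex of modules: a family of submodules preserved
by the differentials. -/
structure SubCx (X : Ch R) where
  N : ∀ n : ℤ, Submodule R (X.X n)
  d_mem : ∀ (i j : ℤ), ∀ x ∈ N i, X.d i j x ∈ N j

instance (X : Ch R) : LE (SubCx X) := ⟨fun Q Q' => ∀ n, Q.N n ≤ Q'.N n⟩

/-- A subcomplex, regarded as a chain complex in its own right. -/
noncomputable def SubCx.toCh {X : Ch R} (Q : SubCx X) : Ch R where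
  X n := ModuleCat.of R (Q.N n)
  d i j := ModuleCat.ofHom ((X.d i j).hom.restrict (Q.d_mem i j))
  shape i j h := by
    refine ModuleCat.hom_ext (LinearMap.ext fun x => Subtype.ext ?_)
    have h0 : X.d i j = 0 := X.shape i j h
    show X.d i j x.1 = _
    rw [h0]
    rfl
  d_comp_d' i j k _ _ := by
    refine ModuleCat.hom_ext (LinearMap.ext fun x => Subtype.ext ?_)
    have h0 : X.d j k (X.d i j x.1) = 0 := by
      rw [← mc_comp_apply, X.d_comp_d i j k, mc_zero_apply]
    exact h0

/-- The inclusion of a smaller subcomplex into a larger one. -/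
noncomputable def SubCx.incl {X : Ch R} {Q Q' : SubCx X} (h : Q ≤ Q') :
    Q.toCh ⟶ Q'.toCh where
  f n := ModuleCat.ofHom (Submodule.inclusion (h n))
  comm' i j _ := by
    refine ModuleCat.hom_ext (LinearMap.ext fun x => Subtype.ext ?_)
    rfl

/-- `M` is a transfinite extension (continuous union) of complexes from `S`. -/
noncomputable def IsTransfiniteExtension (S : Set (Ch R)) (M : Ch R) : Prop :=
  ∃ (lam : Ordinal.{0}) (Q : ∀ α : Ordinal, α ≤ lam → SubCx M)
    (mono : ∀ (α α' : Ordinal.{0}) (h : α ≤ α') (h' : α' ≤ lam), Q α (h.trans h') ≤ Q α' h'),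
    ((Q 0 zero_le).toCh ∈ S) ∧
    (∀ (α : Ordinal.{0}) (h : α < lam),
      cokernel (SubCx.incl (mono α (Order.succ α) (Order.le_succ α) (Order.succ_le_of_lt h)))
        ∈ S) ∧
    (∀ (γ : Ordinal.{0}) (h : γ ≤ lam), Order.IsSuccLimit γ →
      ∀ n : ℤ, (Q γ h).N n = ⨆ (α : Ordinal.{0}) (hα : α < γ), (Q α (hα.le.trans h)).N n) ∧
    (∀ n : ℤ, (Q lam le_rfl).N n = ⊤)






variable {R : Type} [Ring R]


/-- A sub-double-complex of a double complex `𝕏`: a family of submodules preserved by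
the inner and outer differentials. -/
structure SubDCx (𝕏 : DCh R) where
  N : ∀ (n k : ℤ), Submodule R ((𝕏.X n).X k)
  d_inner_mem : ∀ (n i j : ℤ), ∀ x ∈ N n i, (𝕏.X n).d i j x ∈ N n j
  d_outer_mem : ∀ (i j k : ℤ), ∀ x ∈ N i k, (𝕏.d i j).f k x ∈ N j k

instance (𝕏 : DCh R) : LE (SubDCx 𝕏) := ⟨fun Q Q' => ∀ n k, Q.N n k ≤ Q'.N n k⟩

/-- Row `n` of a sub-double-complex, as a chain complex. -/
noncomputable def SubDCx.row {𝕏 : DCh R} (Q : SubDCx 𝕏) (n : ℤ) : Ch R where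
  X k := ModuleCat.of R (Q.N n k)
  d i j := ModuleCat.ofHom (((𝕏.X n).d i j).hom.restrict (Q.d_inner_mem n i j))
  shape i j h := by
    refine ModuleCat.hom_ext (LinearMap.ext fun x => Subtype.ext ?_)
    show (𝕏.X n).d i j x.1 = _
    rw [(𝕏.X n).shape i j h]
    rfl
  d_comp_d' i j k _ _ := by
    refine ModuleCat.hom_ext (LinearMap.ext fun x => Subtype.ext ?_)
    have h0 : (𝕏.X n).d j k ((𝕏.X n).d i j x.1) = 0 := by
      rw [← mc_comp_apply, (𝕏.X n).d_comp_d i j k, mc_zero_apply]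
    exact h0

/-- A sub-double-complex, regarded as a double complex in its own right. -/
noncomputable def SubDCx.toDCh {𝕏 : DCh R} (Q : SubDCx 𝕏) : DCh R where
  X n := Q.row n
  d i j :=
    { f := fun k => ModuleCat.ofHom (((𝕏.d i j).f k).hom.restrict (Q.d_outer_mem i j k))
      comm' := fun a b _ => by
        refine ModuleCat.hom_ext (LinearMap.ext fun x => Subtype.ext ?_)
        have h0 := DFunLike.congr_fun (congrArg ModuleCat.Hom.hom ((𝕏.d i j).comm a b)) x.1
        exact h0 }
  shape i j h := by
    have h0 : 𝕏.d i j = 0 := 𝕏.shape i j h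
    refine HomologicalComplex.hom_ext _ _ fun k => ModuleCat.hom_ext (LinearMap.ext fun x => Subtype.ext ?_)
    show (𝕏.d i j).f k x.1 = _
    rw [h0]
    rfl
  d_comp_d' i j k _ _ := by
    refine HomologicalComplex.hom_ext _ _ fun m => ModuleCat.hom_ext (LinearMap.ext fun x => Subtype.ext ?_)
    have h0 : (𝕏.d j k).f m ((𝕏.d i j).f m x.1) = 0 := by
      have hdd := 𝕏.d_comp_d i j k
      calc (𝕏.d j k).f m ((𝕏.d i j).f m x.1) = ((𝕏.d i j ≫ 𝕏.d j k).f m) x.1 := rfl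
        _ = ((0 : 𝕏.X i ⟶ 𝕏.X k).f m) x.1 := by rw [hdd]
        _ = 0 := rfl
    exact h0


variable {R : Type} [Ring R]

/-- The inclusion of a smaller sub-double-complex into a larger one. -/
noncomputable def SubDCx.incl {𝕏 : DCh R} {Q Q' : SubDCx 𝕏} (h : Q ≤ Q') :
    Q.toDCh ⟶ Q'.toDCh where
  f n :=
    { f := fun k => ModuleCat.ofHom (Submodule.inclusion (h n k))
      comm' := fun i j _ => ModuleCat.hom_ext (LinearMap.ext fun x => Subtype.ext rfl) }
  comm' := fun i j _ =>
    HomologicalComplex.hom_ext _ _ fun k => ModuleCat.hom_ext (LinearMap.ext fun x => Subtype.ext rfl)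






section HomCx
variable {𝒜 : Type u} [Category.{v} 𝒜] [Abelian 𝒜]

/-- The degree-`n` part of the Hom-complex `Hom(X, Y)`:
families of maps `X_p ⟶ Y_{p+n}`. -/
abbrev HChain (X Y : ChainComplex 𝒜 ℤ) (n : ℤ) :=
  ∀ p : ℤ, X.X p ⟶ Y.X (p + n)

/-- The differential of the Hom-complex, `(δ f)_p = d_{p+m} ∘ f_p - (-1)^m f_{p-1} ∘ d_p`. -/
noncomputable def hδ (X Y : ChainComplex 𝒜 ℤ) (m n : ℤ) : HChain X Y m →+ HChain X Y n :=
  AddMonoidHom.mk'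
    (fun f p =>
      f p ≫ Y.d (p + m) (p + n) -
        (m.negOnePow : ℤ) •
          (X.d p (p + n - m) ≫ f (p + n - m) ≫ eqToHom (congrArg Y.X (by omega))))
    (by
      intro f g
      funext p
      simp only [Pi.add_apply, Preadditive.add_comp, Preadditive.comp_add, smul_add]
      abel)

/-- The `n`-th homology of the Hom-complex `Hom(X,Y)`, presented as
(cycles)/(boundaries). -/
noncomputable def homCxHomology (X Y : ChainComplex 𝒜 ℤ) (n : ℤ) : Type v :=
  (hδ X Y n (n - 1)).ker ⧸
    ((hδ X Y (n + 1) n).range.comap (hδ X Y n (n - 1)).ker.subtype)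

noncomputable instance (X Y : ChainComplex 𝒜 ℤ) (n : ℤ) : AddCommGroup (homCxHomology X Y n) := by
  unfold homCxHomology; infer_instance

/-- The suspension `Σⁿ Y`, with `(Σⁿ Y)_k = Y_{k-n}` and differential `(-1)ⁿ d`. -/
noncomputable def shiftC (n : ℤ) (Y : ChainComplex 𝒜 ℤ) : ChainComplex 𝒜 ℤ where
  X k := Y.X (k - n)
  d i j := (n.negOnePow : ℤ) • Y.d (i - n) (j - n)
  shape i j h := by
    try dsimp only
    rw [Y.shape, smul_zero]
    simp only [ComplexShape.down_Rel] at h ⊢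
    omega
  d_comp_d' i j k _ _ := by
    rw [Preadditive.zsmul_comp, Preadditive.comp_zsmul, Y.d_comp_d, smul_zero, smul_zero]

/-- The group of chain homotopy classes of chain maps, i.e. hom-groups in the
homotopy category `K(𝒜)`. -/
noncomputable def htpyClasses (Z W : ChainComplex 𝒜 ℤ) : Type v :=
  (HomotopyCategory.quotient 𝒜 (ComplexShape.down ℤ)).obj Z ⟶
    (HomotopyCategory.quotient 𝒜 (ComplexShape.down ℤ)).obj W

noncomputable instance (Z W : ChainComplex 𝒜 ℤ) : AddCommGroup (htpyClasses Z W) := by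
  unfold htpyClasses; infer_instance

/-- A degreewise split extension of `X` by `Y`. -/
structure DWExtension (X Y : ChainComplex 𝒜 ℤ) where
  Z : ChainComplex 𝒜 ℤ
  i : Y ⟶ Z
  p : Z ⟶ X
  w : i ≫ p = 0
  shortExact : (ShortComplex.mk i p w).ShortExact
  dwSplit : ∀ k : ℤ, ∃ r : Z.X k ⟶ Y.X k, i.f k ≫ r = 𝟙 (Y.X k)

/-- Equivalence of extensions (the Yoneda equivalence relation on `Ext¹`). -/
def DWExtension.equivRel {X Y : ChainComplex 𝒜 ℤ} (E E' : DWExtension X Y) : Prop :=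
  ∃ φ : E.Z ≅ E'.Z, E.i ≫ φ.hom = E'.i ∧ φ.hom ≫ E'.p = E.p

instance dwSetoid (X Y : ChainComplex 𝒜 ℤ) : Setoid (DWExtension X Y) where
  r := DWExtension.equivRel
  iseqv := by
    constructor
    · intro E
      exact ⟨Iso.refl _, by simp, by simp⟩
    · rintro E E' ⟨φ, h1, h2⟩
      refine ⟨φ.symm, ?_, ?_⟩
      · rw [← h1]; simp
      · rw [← h2]; simp
    · rintro E E' E'' ⟨φ, h1, h2⟩ ⟨ψ, h3, h4⟩
      refine ⟨φ ≪≫ ψ, ?_, ?_⟩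
      · simp [reassoc_of% h1, h3]
      · simp [h4, h2]

/-- The pointed set of equivalence classes of degreewise split extensions of `X` by `Y`;
this is `Ext¹_dw(X, Y)`. -/
def DWExtClasses (X Y : ChainComplex 𝒜 ℤ) : Type (max u v) :=
  Quotient (dwSetoid X Y)


end HomCx

/-!
A family `f ∈ Hom(X, Y)_n` is a cycle exactly when, reindexed, it is a chain map
`Σᵃ X ⟶ Σᵇ Y` for any `a - b = n` (the signs `(-1)ᵃ`, `(-1)ᵇ` of the suspensions absorb the sign
`(-1)ⁿ` of `δ`), and it is a boundary `δ u` exactly when that chain map is null homotopic, with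
homotopy `(-1)ᵇ u`. Hence `H_n(Hom(X, Y)) ≅ K(Σᵃ X, Σᵇ Y)`: the case `a = 0` is the second
isomorphism and the case `b = 0` gives the exactness criterion.

For the first isomorphism, degreewise splittings `(r, s)` of `0 → B → Z → X → 0` give the
classifying chain map `s ≫ d_Z ≫ r : X ⟶ Σ B`. Changing the splittings changes it by the null
homotopic map built from `s' ≫ r`, and `Z` is recovered, up to equivalence of extensions, as the
twisted biproduct `B ⊞ X` with differential `[[d_B, φ], [0, d_X]]`; homotopic `φ` give equivalent
twisted extensions. So `Ext¹_dw(X, B) ≅ K(X, Σ B)`, and `B = Σ^{-n-1} Y` with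
`Σ Σ^{-n-1} Y ≅ Σ^{-n} Y` reduces it to the second isomorphism.
-/

section Reindexing

variable {C : Type*} [Category C] {ι : Type*}

lemma family_eq_eqToHom_comp {F G : ι → C} (v : ∀ k, F k ⟶ G k) {a b : ι} (h : a = b) :
    v a = eqToHom (congrArg F h) ≫ v b ≫ eqToHom (congrArg G h.symm) := by
  subst h; simp

lemma family₂_eq_eqToHom_comp {F G : ι → C} (v : ∀ i j, F i ⟶ G j) {i j i' j' : ι}
    (hi : i = i') (hj : j = j') :
    v i j = eqToHom (congrArg F hi) ≫ v i' j' ≫ eqToHom (congrArg G hj.symm) := by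
  subst hi hj; simp

end Reindexing

lemma negOnePow_mul_negOnePow_self (n : ℤ) : (n.negOnePow : ℤ) * n.negOnePow = 1 := by
  rw [← Units.val_mul, Int.units_mul_self, Units.val_one]

lemma negOnePow_smul_negOnePow_smul {C : Type*} [Category C] [Preadditive C] (n : ℤ)
    {A B : C} (g : A ⟶ B) : (n.negOnePow : ℤ) • (n.negOnePow : ℤ) • g = g := by
  rw [smul_smul, negOnePow_mul_negOnePow_self, one_smul]

lemma negOnePow_eq_mul_of_sub_eq {a b n : ℤ} (hn : a - b = n) :
    (n.negOnePow : ℤ) = a.negOnePow * b.negOnePow := by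
  rw [← hn, Int.negOnePow_sub, Units.val_mul]

lemma _root_.Homotopy.eq_nullHomotopicMap' {C : Type*} [Category C] [Preadditive C] {ι : Type*}
    {c : ComplexShape ι} {K L : HomologicalComplex C c} {g : K ⟶ L} (h : Homotopy g 0) :
    g = Homotopy.nullHomotopicMap' (fun i j _ => h.hom i j) := by
  classical
  have hom_eq : (fun i j => if hij : c.Rel j i then h.hom i j else 0) = h.hom := by
    funext i j
    split_ifs with hij
    · rfl
    · exact (h.zero i j hij).symm
  ext i
  simp only [Homotopy.nullHomotopicMap', hom_eq, h.comm i]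
  simp [Homotopy.nullHomotopicMap]

section HomComplex

variable {𝒜 : Type u} [Category.{v} 𝒜] [Abelian 𝒜] {X Y : ChainComplex 𝒜 ℤ}

def IsHomCycle (n : ℤ) (f : HChain X Y n) : Prop :=
  ∀ p q, q + 1 = p → f p ≫ Y.d (p + n) (q + n) = (n.negOnePow : ℤ) • (X.d p q ≫ f q)

lemma hδ_apply (n : ℤ) (f : HChain X Y n) {p q : ℤ} (hq : q + 1 = p) :
    hδ X Y n (n - 1) f p =
      (f p ≫ Y.d (p + n) (q + n) - (n.negOnePow : ℤ) • (X.d p q ≫ f q)) ≫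
        eqToHom (congrArg Y.X (show q + n = p + (n - 1) by omega)) := by
  have hq' : p + (n - 1) - n = q := by omega
  change f p ≫ Y.d (p + n) (p + (n - 1)) -
      (n.negOnePow : ℤ) • (X.d p (p + (n - 1) - n) ≫ f (p + (n - 1) - n) ≫ eqToHom _) = _
  rw [family₂_eq_eqToHom_comp Y.d rfl (show p + (n - 1) = q + n by omega),
    family₂_eq_eqToHom_comp X.d rfl hq', family_eq_eqToHom_comp f hq']
  simp [Preadditive.sub_comp]

lemma hδ_succ_apply (n : ℤ) (u : HChain X Y (n + 1)) {p q : ℤ} (hq : q + 1 = p) :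
    hδ X Y (n + 1) n u p =
      u p ≫ Y.d (p + (n + 1)) (p + n) +
        (n.negOnePow : ℤ) • (X.d p q ≫ u q ≫
          eqToHom (congrArg Y.X (show q + (n + 1) = p + n by omega))) := by
  have hq' : p + n - (n + 1) = q := by omega
  change u p ≫ Y.d (p + (n + 1)) (p + n) -
      ((n + 1).negOnePow : ℤ) • (X.d p (p + n - (n + 1)) ≫ u (p + n - (n + 1)) ≫
        eqToHom _) = _
  rw [family₂_eq_eqToHom_comp X.d rfl hq', family_eq_eqToHom_comp u hq', Int.negOnePow_succ]
  simp [sub_eq_add_neg]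

lemma mem_ker_hδ_iff (n : ℤ) (f : HChain X Y n) :
    f ∈ (hδ X Y n (n - 1)).ker ↔ IsHomCycle n f := by
  simp only [AddMonoidHom.mem_ker, funext_iff, Pi.zero_apply]
  refine ⟨fun h p q hq => ?_, fun h p => ?_⟩
  · have := h p
    rw [hδ_apply n f hq, Preadditive.IsIso.comp_right_eq_zero, sub_eq_zero] at this
    exact this
  · rw [hδ_apply n f (show p - 1 + 1 = p by omega), h p (p - 1) (by omega), sub_self,
      zero_comp]

lemma subsingleton_homCxHomology_iff {n : ℤ} :
    Subsingleton (homCxHomology X Y n) ↔ (hδ X Y n (n - 1)).ker ≤ (hδ X Y (n + 1) n).range := by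
  rw [homCxHomology, QuotientAddGroup.subsingleton_iff, eq_top_iff]
  exact ⟨fun h f hf => h (AddSubgroup.mem_top ⟨f, hf⟩), fun h f _ => h f.2⟩

end HomComplex

section ShiftHom

variable {𝒜 : Type u} [Category.{v} 𝒜] [Abelian 𝒜] {X Y : ChainComplex 𝒜 ℤ} {a b n : ℤ}

/- The objects of `shiftC b Y` are only definitionally equal to those of `Y`. The following
accessors restate components with the objects of `X` and `Y`, so that `rw` and `simp` can compose
them with `X.d`, `Y.d` and `eqToHom`. -/
def shiftHomF (g : shiftC a X ⟶ shiftC b Y) (p : ℤ) : X.X (p - a) ⟶ Y.X (p - b) := g.f p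

def homToShiftF (φ : X ⟶ shiftC b Y) (p : ℤ) : X.X p ⟶ Y.X (p - b) := φ.f p

def homotopyToShiftF {φ φ' : X ⟶ shiftC b Y} (h : Homotopy φ φ') (i j : ℤ) :
    X.X i ⟶ Y.X (j - b) :=
  h.hom i j

lemma d_comp_homToShiftF (φ : X ⟶ shiftC b Y) (i j : ℤ) :
    X.d i j ≫ homToShiftF φ j = (b.negOnePow : ℤ) • (homToShiftF φ i ≫ Y.d (i - b) (j - b)) :=
  (φ.comm i j).symm.trans (Preadditive.comp_zsmul _ _ _)

lemma homToShiftF_eq_of_homotopy {φ φ' : X ⟶ shiftC b Y} (h : Homotopy φ φ') (i : ℤ) :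
    homToShiftF φ i = X.d i (i - 1) ≫ homotopyToShiftF h (i - 1) i +
      (b.negOnePow : ℤ) • (homotopyToShiftF h i (i + 1) ≫ Y.d (i + 1 - b) (i - b)) +
        homToShiftF φ' i := by
  have hc := h.comm i
  rw [dNext_eq _ (show (ComplexShape.down ℤ).Rel i (i - 1) by simp),
    prevD_eq _ (show (ComplexShape.down ℤ).Rel (i + 1) i by simp)] at hc
  exact hc.trans (congrArg₂ _ (congrArg₂ _ rfl (Preadditive.comp_zsmul _ _ _)) rfl)

lemma shiftHomF_comm (hn : a - b = n) (g : shiftC a X ⟶ shiftC b Y) {p q : ℤ} (hq : q + 1 = p) :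
    shiftHomF g p ≫ Y.d (p - b) (q - b) =
      (n.negOnePow : ℤ) • (X.d (p - a) (q - a) ≫ shiftHomF g q) := by
  have hc := g.comm p q
  change shiftHomF g p ≫ ((b.negOnePow : ℤ) • Y.d (p - b) (q - b)) =
    ((a.negOnePow : ℤ) • X.d (p - a) (q - a)) ≫ shiftHomF g q at hc
  rw [← negOnePow_smul_negOnePow_smul b (_ ≫ _), ← Preadditive.comp_zsmul, hc,
    Preadditive.zsmul_comp, smul_smul, negOnePow_eq_mul_of_sub_eq hn, mul_comm]

noncomputable def shiftHomOfCycle (hn : a - b = n) (f : HChain X Y n) (hf : IsHomCycle n f) :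
    shiftC a X ⟶ shiftC b Y where
  f p := (f (p - a) ≫ eqToHom (congrArg Y.X (show p - a + n = p - b by omega)) :
    X.X (p - a) ⟶ Y.X (p - b))
  comm' i j hij := by
    change _ ≫ ((b.negOnePow : ℤ) • Y.d (i - b) (j - b)) =
      ((a.negOnePow : ℤ) • X.d (i - a) (j - a)) ≫ _
    rw [family₂_eq_eqToHom_comp Y.d (show i - b = i - a + n by omega)
      (show j - b = j - a + n by omega)]
    simp only [Preadditive.comp_zsmul, Preadditive.zsmul_comp, Category.assoc,
      eqToHom_trans_assoc, eqToHom_refl, Category.id_comp]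
    rw [← Category.assoc, hf _ _ (by simp at hij; omega), negOnePow_eq_mul_of_sub_eq hn,
      Preadditive.zsmul_comp, Category.assoc, smul_smul, mul_left_comm,
      negOnePow_mul_negOnePow_self, mul_one]

lemma shiftHomF_shiftHomOfCycle (hn : a - b = n) (f : HChain X Y n) (hf : IsHomCycle n f)
    (p : ℤ) : shiftHomF (shiftHomOfCycle hn f hf) p =
      f (p - a) ≫ eqToHom (congrArg Y.X (show p - a + n = p - b by omega)) := rfl

noncomputable def cycleOfShiftHom (hn : a - b = n) (g : shiftC a X ⟶ shiftC b Y) :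
    HChain X Y n := fun p =>
  eqToHom (congrArg X.X (show p = p + a - a by omega)) ≫ shiftHomF g (p + a) ≫
    eqToHom (congrArg Y.X (show p + a - b = p + n by omega))

lemma isHomCycle_cycleOfShiftHom (hn : a - b = n) (g : shiftC a X ⟶ shiftC b Y) :
    IsHomCycle n (cycleOfShiftHom hn g) := by
  intro p q hq
  rw [family₂_eq_eqToHom_comp Y.d (show p + n = p + a - b by omega)
      (show q + n = q + a - b by omega),
    family₂_eq_eqToHom_comp X.d (show p = p + a - a by omega) (show q = q + a - a by omega)]
  simp only [cycleOfShiftHom, Category.assoc, eqToHom_trans_assoc, eqToHom_refl,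
    Category.id_comp]
  rw [reassoc_of% (shiftHomF_comm hn g (show q + a + 1 = p + a by omega))]
  simp

lemma shiftHom_ext {g g' : shiftC a X ⟶ shiftC b Y} (h : ∀ p, shiftHomF g p = shiftHomF g' p) :
    g = g' :=
  HomologicalComplex.hom_ext _ _ h

noncomputable def kerHδEquivShiftHom (hn : a - b = n) :
    (hδ X Y n (n - 1)).ker ≃+ (shiftC a X ⟶ shiftC b Y) where
  toFun f := shiftHomOfCycle hn f.1 ((mem_ker_hδ_iff n f.1).1 f.2)
  invFun g := ⟨cycleOfShiftHom hn g, (mem_ker_hδ_iff n _).2 (isHomCycle_cycleOfShiftHom hn g)⟩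
  left_inv f := by
    ext p
    simp only [cycleOfShiftHom, shiftHomF_shiftHomOfCycle]
    rw [family_eq_eqToHom_comp f.1 (show p + a - a = p by omega)]
    simp
  right_inv g := shiftHom_ext fun p => by
    rw [shiftHomF_shiftHomOfCycle]
    dsimp only [cycleOfShiftHom]
    rw [family_eq_eqToHom_comp (shiftHomF g) (show p - a + a = p by omega)]
    simp
  map_add' f g := shiftHom_ext fun p => Preadditive.add_comp _ _ _ _ _ _

lemma shiftHomF_nullHomotopicMap'
    (H : ∀ i j, (ComplexShape.down ℤ).Rel j i → (X.X (i - a) ⟶ Y.X (j - b))) (p : ℤ) :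
    shiftHomF (Homotopy.nullHomotopicMap' (C := shiftC a X) (D := shiftC b Y) H) p =
      ((a.negOnePow : ℤ) • X.d (p - a) (p - 1 - a)) ≫ H (p - 1) p (by simp) +
        H p (p + 1) (by simp) ≫ ((b.negOnePow : ℤ) • Y.d (p + 1 - b) (p - b)) :=
  Homotopy.nullHomotopicMap'_f (C := shiftC a X) (D := shiftC b Y)
    (show (ComplexShape.down ℤ).Rel (p + 1) p by simp)
    (show (ComplexShape.down ℤ).Rel p (p - 1) by simp) H

noncomputable def shiftHomotopyOfChain (hn : a - b = n) (u : HChain X Y (n + 1)) (i j : ℤ)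
    (hij : (ComplexShape.down ℤ).Rel j i) : X.X (i - a) ⟶ Y.X (j - b) :=
  (b.negOnePow : ℤ) • (u (i - a) ≫
    eqToHom (congrArg Y.X (show i - a + (n + 1) = j - b by change i + 1 = j at hij; omega)))

lemma shiftHomF_nullHomotopicMap'_shiftHomotopyOfChain (hn : a - b = n)
    (u : HChain X Y (n + 1)) (p : ℤ) :
    shiftHomF (Homotopy.nullHomotopicMap' (C := shiftC a X) (D := shiftC b Y)
      (shiftHomotopyOfChain hn u)) p =
      hδ X Y (n + 1) n u (p - a) ≫ eqToHom (congrArg Y.X (show p - a + n = p - b by omega)) := by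
  rw [shiftHomF_nullHomotopicMap', hδ_succ_apply n u (show p - 1 - a + 1 = p - a by omega)]
  dsimp only [shiftHomotopyOfChain]
  rw [family₂_eq_eqToHom_comp Y.d (show p + 1 - b = p - a + (n + 1) by omega)
      (show p - b = p - a + n by omega)]
  simp only [Preadditive.add_comp, Preadditive.zsmul_comp, Preadditive.comp_zsmul,
    Category.assoc, eqToHom_trans, eqToHom_trans_assoc, eqToHom_refl, Category.id_comp, smul_smul,
    negOnePow_eq_mul_of_sub_eq hn]
  rw [negOnePow_mul_negOnePow_self, one_smul, mul_comm, add_comm]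

lemma shiftHomOfCycle_eq_nullHomotopicMap'_iff (hn : a - b = n) (f : HChain X Y n)
    (hf : IsHomCycle n f) (u : HChain X Y (n + 1)) :
    shiftHomOfCycle hn f hf = Homotopy.nullHomotopicMap' (shiftHomotopyOfChain hn u) ↔
      hδ X Y (n + 1) n u = f := by
  refine ⟨fun h => funext fun q => ?_, fun h => shiftHom_ext fun p => ?_⟩
  · have hq := congrArg (fun g => shiftHomF g (q + a)) h
    simp only [shiftHomF_shiftHomOfCycle, shiftHomF_nullHomotopicMap'_shiftHomotopyOfChain,
      cancel_mono] at hq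
    rw [add_sub_cancel_right] at hq
    exact hq.symm
  · rw [shiftHomF_shiftHomOfCycle, shiftHomF_nullHomotopicMap'_shiftHomotopyOfChain, h]

noncomputable def chainOfShiftHomotopy (hn : a - b = n) (hom : ∀ i j, X.X (i - a) ⟶ Y.X (j - b)) :
    HChain X Y (n + 1) := fun p =>
  (b.negOnePow : ℤ) • (eqToHom (congrArg X.X (show p = p + a - a by omega)) ≫
    hom (p + a) (p + a + 1) ≫ eqToHom (congrArg Y.X (show p + a + 1 - b = p + (n + 1) by omega)))

lemma shiftHomotopyOfChain_chainOfShiftHomotopy (hn : a - b = n)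
    (hom : ∀ i j, X.X (i - a) ⟶ Y.X (j - b)) :
    shiftHomotopyOfChain hn (chainOfShiftHomotopy hn hom) = fun i j _ => hom i j := by
  funext i j hij
  change i + 1 = j at hij
  dsimp only [shiftHomotopyOfChain, chainOfShiftHomotopy]
  rw [family₂_eq_eqToHom_comp hom (show i - a + a = i by omega)
    (show i - a + a + 1 = j by omega)]
  simp [negOnePow_smul_negOnePow_smul]

lemma nonempty_homotopy_shiftHomOfCycle_iff (hn : a - b = n) (f : HChain X Y n)
    (hf : IsHomCycle n f) :
    Nonempty (Homotopy (shiftHomOfCycle hn f hf) 0) ↔ f ∈ (hδ X Y (n + 1) n).range := by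
  constructor
  · rintro ⟨h⟩
    refine ⟨chainOfShiftHomotopy hn h.hom,
      (shiftHomOfCycle_eq_nullHomotopicMap'_iff hn f hf _).1 ?_⟩
    rw [shiftHomotopyOfChain_chainOfShiftHomotopy hn h.hom]
    exact h.eq_nullHomotopicMap'
  · rintro ⟨u, hu⟩
    exact ⟨(Homotopy.ofEq ((shiftHomOfCycle_eq_nullHomotopicMap'_iff hn f hf u).2 hu)).trans
      (Homotopy.nullHomotopy' _)⟩

noncomputable def kerHδToHtpyClasses (hn : a - b = n) :
    (hδ X Y n (n - 1)).ker →+ htpyClasses (shiftC a X) (shiftC b Y) :=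
  (HomotopyCategory.quotient 𝒜 (ComplexShape.down ℤ)).mapAddHom.comp
    (kerHδEquivShiftHom hn).toAddMonoidHom

lemma kerHδToHtpyClasses_surjective (hn : a - b = n) :
    Function.Surjective (kerHδToHtpyClasses (X := X) (Y := Y) hn) :=
  (HomotopyCategory.quotient 𝒜 (ComplexShape.down ℤ)).map_surjective.comp
    (kerHδEquivShiftHom hn).surjective

lemma ker_kerHδToHtpyClasses (hn : a - b = n) :
    (kerHδToHtpyClasses (X := X) (Y := Y) hn).ker =
      (hδ X Y (n + 1) n).range.comap (hδ X Y n (n - 1)).ker.subtype := by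
  ext f
  simp only [AddMonoidHom.mem_ker, AddSubgroup.mem_comap, AddSubgroup.coe_subtype]
  exact (HomotopyCategory.quotient_map_eq_zero_iff _).trans
    (nonempty_homotopy_shiftHomOfCycle_iff hn f.1 ((mem_ker_hδ_iff n f.1).1 f.2))

noncomputable def homCxHomologyEquivHtpyClasses (hn : a - b = n) :
    homCxHomology X Y n ≃+ htpyClasses (shiftC a X) (shiftC b Y) :=
  (QuotientAddGroup.quotientAddEquivOfEq (ker_kerHδToHtpyClasses hn).symm).trans
    (QuotientAddGroup.quotientKerEquivOfSurjective _ (kerHδToHtpyClasses_surjective hn))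

end ShiftHom

section HomotopyClasses

variable {𝒜 : Type u} [Category.{v} 𝒜] [Abelian 𝒜]

noncomputable def shiftCZeroIso (X : ChainComplex 𝒜 ℤ) : shiftC 0 X ≅ X :=
  HomologicalComplex.Hom.isoOfComponents (fun k => eqToIso (congrArg X.X (sub_zero k)))
    fun i j _ => by
      change eqToHom (congrArg X.X (sub_zero i)) ≫ X.d i j =
        ((Int.negOnePow 0 : ℤ) • X.d (i - 0) (j - 0)) ≫ eqToHom (congrArg X.X (sub_zero j))
      rw [Int.negOnePow_zero, Units.val_one, one_smul,
        family₂_eq_eqToHom_comp X.d (sub_zero i) (sub_zero j)]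
      simp

noncomputable def shiftCShiftCIso (Y : ChainComplex 𝒜 ℤ) {a b c : ℤ} (h : a + b = c) :
    shiftC a (shiftC b Y) ≅ shiftC c Y :=
  HomologicalComplex.Hom.isoOfComponents
    (fun k => eqToIso (congrArg Y.X (show k - a - b = k - c by omega))) fun i j _ => by
      subst h
      change eqToHom (congrArg Y.X (show i - a - b = i - (a + b) by omega)) ≫
          (((a + b).negOnePow : ℤ) • Y.d (i - (a + b)) (j - (a + b))) =
        ((a.negOnePow : ℤ) • (b.negOnePow : ℤ) • Y.d (i - a - b) (j - a - b)) ≫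
          eqToHom (congrArg Y.X (show j - a - b = j - (a + b) by omega))
      rw [family₂_eq_eqToHom_comp Y.d (show i - a - b = i - (a + b) by omega)
        (show j - a - b = j - (a + b) by omega), Int.negOnePow_add]
      simp [smul_smul]

noncomputable def htpyClassesCongr {Z Z' W W' : ChainComplex 𝒜 ℤ} (e : Z ≅ Z') (e' : W ≅ W') :
    htpyClasses Z W ≃+ htpyClasses Z' W' :=
  (Linear.homCongr ℤ ((HomotopyCategory.quotient 𝒜 _).mapIso e)
    ((HomotopyCategory.quotient 𝒜 _).mapIso e')).toAddEquiv

lemma subsingleton_htpyClasses_iff {Z W : ChainComplex 𝒜 ℤ} :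
    Subsingleton (htpyClasses Z W) ↔ ∀ f : Z ⟶ W, Nonempty (Homotopy f 0) := by
  simp only [← HomotopyCategory.quotient_map_eq_zero_iff]
  rw [subsingleton_iff_forall_eq 0]
  exact (HomotopyCategory.quotient 𝒜 (ComplexShape.down ℤ)).map_surjective.forall

end HomotopyClasses

section Splitting

variable {C : Type*} [Category C] [Preadditive C] {S : ShortComplex C} (σ τ : S.Splitting)

lemma _root_.CategoryTheory.ShortComplex.Splitting.s_eq_add_comp_f :
    τ.s = σ.s + (τ.s ≫ σ.r) ≫ S.f := by
  conv_lhs => rw [← Category.comp_id τ.s, ← σ.id]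
  rw [Preadditive.comp_add, τ.s_g_assoc, add_comm, Category.assoc]

lemma _root_.CategoryTheory.ShortComplex.Splitting.r_eq_sub_g_comp :
    τ.r = σ.r - S.g ≫ τ.s ≫ σ.r := by
  have hsr : σ.s ≫ τ.r = -(τ.s ≫ σ.r) := by
    have := τ.s_r
    rw [σ.s_eq_add_comp_f τ, Preadditive.add_comp, Category.assoc, Category.assoc, τ.f_r,
      Category.comp_id, add_eq_zero_iff_eq_neg] at this
    exact this
  conv_lhs => rw [← Category.id_comp τ.r, ← σ.id]
  rw [Preadditive.add_comp, Category.assoc, τ.f_r, Category.comp_id, Category.assoc, hsr,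
    Preadditive.comp_neg, sub_eq_add_neg]

end Splitting

section DWExtension

variable {𝒜 : Type u} [Category.{v} 𝒜] [Abelian 𝒜] {X B : ChainComplex 𝒜 ℤ}

namespace DWExtension

variable (E : DWExtension X B)

lemma i_f_comp_p_f (k : ℤ) : E.i.f k ≫ E.p.f k = 0 := by
  rw [← HomologicalComplex.comp_f, E.w, HomologicalComplex.zero_f]

abbrev shortComplex (k : ℤ) : ShortComplex 𝒜 :=
  ShortComplex.mk (E.i.f k) (E.p.f k) (E.i_f_comp_p_f k)

lemma shortExact_shortComplex (k : ℤ) : (E.shortComplex k).ShortExact :=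
  (HomologicalComplex.shortExact_iff_degreewise_shortExact _).1 E.shortExact k

noncomputable def splitting (k : ℤ) : (E.shortComplex k).Splitting :=
  ShortComplex.Splitting.ofExactOfRetraction _ (E.shortExact_shortComplex k).exact
    (E.dwSplit k).choose (E.dwSplit k).choose_spec (E.shortExact_shortComplex k).epi_g

variable {E}

def connecting (σ : ∀ k, (E.shortComplex k).Splitting) (i j : ℤ) : X.X i ⟶ B.X j :=
  (σ i).s ≫ E.Z.d i j ≫ (σ j).r

lemma s_comp_d_comp_p (σ : ∀ k, (E.shortComplex k).Splitting) (i j : ℤ) :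
    (σ i).s ≫ E.Z.d i j ≫ E.p.f j = X.d i j := by
  rw [← E.p.comm, ← Category.assoc, (σ i).s_g, Category.id_comp]

lemma i_comp_d_comp_p (i j : ℤ) : E.i.f i ≫ E.Z.d i j ≫ E.p.f j = 0 := by
  rw [← E.p.comm, reassoc_of% (E.i_f_comp_p_f i), zero_comp]

lemma i_comp_d_comp_r (σ : ∀ k, (E.shortComplex k).Splitting) (i j : ℤ) :
    E.i.f i ≫ E.Z.d i j ≫ (σ j).r = B.d i j := by
  rw [← Category.assoc, E.i.comm, Category.assoc]
  exact B.d i j ≫= (σ j).f_r |>.trans (Category.comp_id _)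

lemma connecting_comp_d_add_d_comp_connecting (σ : ∀ k, (E.shortComplex k).Splitting)
    (i j l : ℤ) : connecting σ i j ≫ B.d j l + X.d i j ≫ connecting σ j l = 0 := by
  have h := (σ i).s ≫= E.Z.d i j ≫= (σ j).id =≫ E.Z.d j l ≫ (σ l).r
  simp only [Category.id_comp, HomologicalComplex.d_comp_d_assoc, zero_comp, comp_zero,
    Preadditive.add_comp, Preadditive.comp_add, Category.assoc] at h
  rw [connecting, connecting, ← i_comp_d_comp_r σ j l, ← s_comp_d_comp_p σ i j]
  simpa only [Category.assoc] using h

lemma connecting_sub_connecting (σ τ : ∀ k, (E.shortComplex k).Splitting) (i j : ℤ) :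
    connecting τ i j - connecting σ i j =
      ((τ i).s ≫ (σ i).r) ≫ B.d i j - X.d i j ≫ (τ j).s ≫ (σ j).r := by
  have hs := (σ i).s_eq_add_comp_f (τ i)
  have hr := (σ j).r_eq_sub_g_comp (τ j)
  calc connecting τ i j - connecting σ i j
      = ((σ i).s + ((τ i).s ≫ (σ i).r) ≫ E.i.f i) ≫ E.Z.d i j ≫
          ((σ j).r - E.p.f j ≫ (τ j).s ≫ (σ j).r) - connecting σ i j := by
        rw [← hs, ← hr]; rfl
    _ = _ := by
        simp only [connecting, Preadditive.add_comp, Preadditive.comp_sub, Category.assoc,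
          reassoc_of% (s_comp_d_comp_p σ i j), i_comp_d_comp_r, reassoc_of% (i_comp_d_comp_p i j),
          zero_comp, comp_zero]
        abel

noncomputable def classifyingMap (σ : ∀ k, (E.shortComplex k).Splitting) : X ⟶ shiftC 1 B where
  f k := connecting σ k (k - 1)
  comm' k j hkj := by
    obtain rfl : j = k - 1 := by simp at hkj; omega
    change connecting σ k (k - 1) ≫ ((Int.negOnePow 1 : ℤ) • B.d (k - 1) (k - 1 - 1)) =
      X.d k (k - 1) ≫ connecting σ (k - 1) (k - 1 - 1)
    rw [Int.negOnePow_one, Units.val_neg, Units.val_one, neg_one_smul, Preadditive.comp_neg,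
      neg_eq_iff_add_eq_zero]
    exact connecting_comp_d_add_d_comp_connecting σ _ _ _

lemma classifyingMap_sub_classifyingMap (σ τ : ∀ k, (E.shortComplex k).Splitting) :
    classifyingMap σ - classifyingMap τ = Homotopy.nullHomotopicMap' (C := X) (D := shiftC 1 B)
      (fun k j hkj => ((τ k).s ≫ (σ k).r) ≫
        eqToHom (congrArg B.X (show k = j - 1 by change k + 1 = j at hkj; omega))) := by
  ext k
  refine Eq.trans ?_ (Homotopy.nullHomotopicMap'_f
    (show (ComplexShape.down ℤ).Rel (k + 1) k by simp)
    (show (ComplexShape.down ℤ).Rel k (k - 1) by simp) _).symm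
  change connecting σ k (k - 1) - connecting τ k (k - 1) =
    X.d k (k - 1) ≫ ((τ (k - 1)).s ≫ (σ (k - 1)).r) ≫ eqToHom (congrArg B.X rfl) +
      (((τ k).s ≫ (σ k).r) ≫ eqToHom (congrArg B.X (show k = k + 1 - 1 by omega))) ≫
        ((Int.negOnePow 1 : ℤ) • B.d (k + 1 - 1) (k - 1))
  rw [← neg_sub (connecting τ k (k - 1)), connecting_sub_connecting σ τ, Int.negOnePow_one,
    Units.val_neg, Units.val_one, neg_one_smul,
    family₂_eq_eqToHom_comp B.d (show k + 1 - 1 = k by omega) rfl]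
  simp only [eqToHom_refl, Category.comp_id, Category.assoc, eqToHom_trans_assoc,
    Category.id_comp, Preadditive.comp_neg]
  abel

lemma quotient_map_classifyingMap_eq (σ τ : ∀ k, (E.shortComplex k).Splitting) :
    (HomotopyCategory.quotient 𝒜 _).map (classifyingMap σ) =
      (HomotopyCategory.quotient 𝒜 _).map (classifyingMap τ) :=
  HomotopyCategory.eq_of_homotopy _ _ (Homotopy.equivSubZero.symm
    ((Homotopy.ofEq (classifyingMap_sub_classifyingMap σ τ)).trans (Homotopy.nullHomotopy' _)))

lemma quotient_map_classifyingMap_eq_of_equivRel {E E' : DWExtension X B} (h : E.equivRel E') :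
    (HomotopyCategory.quotient 𝒜 _).map (classifyingMap E.splitting) =
      (HomotopyCategory.quotient 𝒜 _).map (classifyingMap E'.splitting) := by
  obtain ⟨φ, h₁, h₂⟩ := h
  have hi : ∀ k, E'.i.f k ≫ φ.inv.f k = E.i.f k := fun k => by
    rw [← HomologicalComplex.comp_f, ← h₁, Category.assoc, φ.hom_inv_id, Category.comp_id]
  have hp : ∀ k, φ.inv.f k ≫ E.p.f k = E'.p.f k := fun k => by
    rw [← HomologicalComplex.comp_f, ← h₂, φ.inv_hom_id_assoc]
  have hφ : ∀ k, φ.inv.f k ≫ φ.hom.f k = 𝟙 _ := fun k => by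
    rw [← HomologicalComplex.comp_f, φ.inv_hom_id, HomologicalComplex.id_f]
  let e : ∀ k, E'.shortComplex k ≅ E.shortComplex k := fun k =>
    ShortComplex.isoMk (Iso.refl _) ((HomologicalComplex.eval 𝒜 _ k).mapIso φ.symm) (Iso.refl _)
      (by simp [hi]) (by simp [hp])
  rw [quotient_map_classifyingMap_eq E.splitting fun k => (E'.splitting k).ofIso (e k)]
  congr 1
  ext k
  change (𝟙 _ ≫ (E'.splitting k).s ≫ φ.inv.f k) ≫ E.Z.d k (k - 1) ≫
    φ.hom.f (k - 1) ≫ (E'.splitting (k - 1)).r ≫ 𝟙 _ = connecting E'.splitting k (k - 1)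
  simp only [Category.id_comp, Category.comp_id, Category.assoc]
  rw [φ.inv.comm_assoc, reassoc_of% hφ]
  rfl

end DWExtension

open DWExtension

noncomputable def twist (φ : X ⟶ shiftC 1 B) (i j : ℤ) : X.X i ⟶ B.X j :=
  if h : j + 1 = i then homToShiftF φ i ≫ eqToHom (congrArg B.X (show i - 1 = j by omega))
  else 0

lemma twist_of_eq (φ : X ⟶ shiftC 1 B) {i j : ℤ} (h : j + 1 = i) :
    twist φ i j = homToShiftF φ i ≫ eqToHom (congrArg B.X (show i - 1 = j by omega)) :=
  dif_pos h

lemma twist_sub_one (φ : X ⟶ shiftC 1 B) (i : ℤ) : twist φ i (i - 1) = homToShiftF φ i := by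
  rw [twist_of_eq φ (by omega), eqToHom_refl, Category.comp_id]

lemma twist_comp_d_add_d_comp_twist (φ : X ⟶ shiftC 1 B) (i j l : ℤ) :
    twist φ i j ≫ B.d j l + X.d i j ≫ twist φ j l = 0 := by
  by_cases hij : j + 1 = i
  · by_cases hjl : l + 1 = j
    · rw [twist_of_eq φ hij, twist_of_eq φ hjl, ← Category.assoc (X.d i j), d_comp_homToShiftF,
        family₂_eq_eqToHom_comp B.d (show j = i - 1 by omega) (show l = j - 1 by omega)]
      simp [Int.negOnePow_one]
    · simp [twist, hjl]
  · simp [twist, hij]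

noncomputable abbrev twistedComplex (φ : X ⟶ shiftC 1 B) : ChainComplex 𝒜 ℤ where
  X k := B.X k ⊞ X.X k
  d k j := biprod.desc (B.d k j ≫ biprod.inl) (twist φ k j ≫ biprod.inl + X.d k j ≫ biprod.inr)
  shape k j hkj := by
    ext <;> simp [twist, show ¬ j + 1 = k from hkj]
  d_comp_d' i j l _ _ := by
    ext <;> simp [twist_comp_d_add_d_comp_twist]

noncomputable abbrev twistedExt (φ : X ⟶ shiftC 1 B) : DWExtension X B where
  Z := twistedComplex φ
  i := { f := fun _ => biprod.inl, comm' := fun i j _ => by simp [twistedComplex] }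
  p := { f := fun _ => biprod.snd
         comm' := fun i j _ => by apply biprod.hom_ext' <;> simp [twistedComplex] }
  w := by ext; exact biprod.inl_snd
  shortExact := HomologicalComplex.shortExact_of_degreewise_shortExact _ fun _ =>
    (ShortComplex.Splitting.ofHasBinaryBiproduct _ _).shortExact
  dwSplit _ := ⟨biprod.fst, biprod.inl_fst⟩

noncomputable def twistedSplitting (φ : X ⟶ shiftC 1 B) (k : ℤ) :
    ((twistedExt φ).shortComplex k).Splitting :=
  ShortComplex.Splitting.ofHasBinaryBiproduct _ _

lemma classifyingMap_twistedSplitting (φ : X ⟶ shiftC 1 B) :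
    DWExtension.classifyingMap (twistedSplitting φ) = φ := by
  ext k
  change biprod.inr ≫ (twistedComplex φ).d k (k - 1) ≫ biprod.fst = homToShiftF φ k
  simp [twistedComplex, twist_sub_one]

lemma twist_add_comp_d_of_homotopy {φ φ' : X ⟶ shiftC 1 B} (h : Homotopy φ φ') {i j : ℤ}
    (hij : j + 1 = i) :
    twist φ i j + homotopyToShiftF h i (i + 1) ≫ eqToHom (congrArg B.X (add_sub_cancel_right i 1)) ≫
        B.d i j =
      X.d i j ≫ homotopyToShiftF h j (j + 1) ≫ eqToHom (congrArg B.X (add_sub_cancel_right j 1)) +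
        twist φ' i j := by
  obtain rfl : j = i - 1 := by omega
  rw [twist_sub_one, twist_sub_one, homToShiftF_eq_of_homotopy h i,
    family₂_eq_eqToHom_comp (homotopyToShiftF h) (rfl : i - 1 = i - 1)
      (show i = i - 1 + 1 by omega),
    family₂_eq_eqToHom_comp B.d (show i + 1 - 1 = i by omega) rfl]
  simp only [eqToHom_refl, Category.id_comp, Category.comp_id, Int.negOnePow_one, Units.val_neg,
    Units.val_one, neg_one_smul]
  abel

lemma twistedExt_equivRel_of_homotopy {φ φ' : X ⟶ shiftC 1 B} (h : Homotopy φ φ') :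
    (twistedExt φ).equivRel (twistedExt φ') := by
  let w : ∀ k, X.X k ⟶ B.X k := fun k =>
    homotopyToShiftF h k (k + 1) ≫ eqToHom (congrArg B.X (add_sub_cancel_right k 1))
  refine ⟨HomologicalComplex.Hom.isoOfComponents (fun k => Biprod.unipotentLower (-w k))
    fun i j hij => ?_, ?_, ?_⟩
  · have hw : twist φ i j ≫ biprod.inl = X.d i j ≫ w j ≫ biprod.inl +
        twist φ' i j ≫ biprod.inl - w i ≫ B.d i j ≫ (biprod.inl : _ ⟶ _ ⊞ X.X j) := by
      rw [eq_sub_iff_add_eq]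
      simp only [w, Category.assoc]
      simpa only [Preadditive.add_comp, Category.assoc] using
        twist_add_comp_d_of_homotopy h (i := i) (j := j) (by simpa using hij) =≫ biprod.inl
    apply biprod.hom_ext'
    · simp [Biprod.ofComponents]
    · simp [Biprod.ofComponents, hw]
      abel
  · ext k
    all_goals simp [Biprod.ofComponents]
  · ext k
    all_goals simp [Biprod.ofComponents]

lemma twist_classifyingMap {E : DWExtension X B} (σ : ∀ k, (E.shortComplex k).Splitting)
    (i j : ℤ) : twist (classifyingMap σ) i j = connecting σ i j := by
  by_cases hij : j + 1 = i
  · obtain rfl : j = i - 1 := by omega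
    exact twist_sub_one _ i
  · rw [twist, dif_neg hij, connecting, E.Z.shape i j (by simpa using hij), zero_comp, comp_zero]

lemma twistedExt_classifyingMap_equivRel {E : DWExtension X B}
    (σ : ∀ k, (E.shortComplex k).Splitting) :
    (twistedExt (classifyingMap σ)).equivRel E := by
  refine ⟨HomologicalComplex.Hom.isoOfComponents (fun k => ((σ k).isoBinaryBiproduct).symm)
    fun i j _ => ?_, ?_, ?_⟩
  · apply biprod.hom_ext'
    · simp
    · have h := (σ i).s ≫= E.Z.d i j ≫= (σ j).id
      simp only [Category.comp_id, Preadditive.comp_add, reassoc_of% (s_comp_d_comp_p σ i j)] at h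
      simpa [twist_classifyingMap, connecting] using h.symm
  · ext k
    simp
  · ext k
    · simp [i_f_comp_p_f]
    · simpa using (σ k).s_g

noncomputable def classifyingClass : DWExtClasses X B → htpyClasses X (shiftC 1 B) :=
  Quotient.lift (fun E => (HomotopyCategory.quotient 𝒜 _).map (classifyingMap E.splitting))
    fun _ _ => quotient_map_classifyingMap_eq_of_equivRel

lemma classifyingClass_injective : Function.Injective (classifyingClass (X := X) (B := B)) := by
  rintro ⟨E⟩ ⟨E'⟩ h
  have hh := HomotopyCategory.homotopyOfEq _ _ h
  calc Quotient.mk _ E = Quotient.mk _ (twistedExt (classifyingMap E.splitting)) :=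
        (Quotient.sound (twistedExt_classifyingMap_equivRel E.splitting)).symm
    _ = Quotient.mk _ (twistedExt (classifyingMap E'.splitting)) :=
        Quotient.sound (twistedExt_equivRel_of_homotopy hh)
    _ = Quotient.mk _ E' := Quotient.sound (twistedExt_classifyingMap_equivRel E'.splitting)

lemma classifyingClass_surjective :
    Function.Surjective (classifyingClass (X := X) (B := B)) := fun x => by
  obtain ⟨φ, rfl⟩ := (HomotopyCategory.quotient 𝒜 _).map_surjective x
  refine ⟨Quotient.mk _ (twistedExt φ), ?_⟩
  change (HomotopyCategory.quotient 𝒜 _).map (classifyingMap (twistedExt φ).splitting) = _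
  rw [quotient_map_classifyingMap_eq _ (twistedSplitting φ), classifyingMap_twistedSplitting]

variable (X B) in
noncomputable def dwExtClassesEquivHtpyClasses : DWExtClasses X B ≃ htpyClasses X (shiftC 1 B) :=
  Equiv.ofBijective classifyingClass ⟨classifyingClass_injective, classifyingClass_surjective⟩

end DWExtension

section Assembly

variable {𝒜 : Type u} [Category.{v} 𝒜] [Abelian 𝒜]

variable (X Y : ChainComplex 𝒜 ℤ)

noncomputable def homCxHomologyEquivHtpyClassesToShift (n : ℤ) :
    homCxHomology X Y n ≃+ htpyClasses X (shiftC (-n) Y) :=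
  (homCxHomologyEquivHtpyClasses (a := 0) (b := -n) (by omega)).trans
    (htpyClassesCongr (shiftCZeroIso X) (Iso.refl _))

noncomputable def homCxHomologyEquivHtpyClassesFromShift (n : ℤ) :
    homCxHomology X Y n ≃+ htpyClasses (shiftC n X) Y :=
  (homCxHomologyEquivHtpyClasses (a := n) (b := 0) (by omega)).trans
    (htpyClassesCongr (Iso.refl _) (shiftCZeroIso Y))

noncomputable def dwExtClassesEquivHomCxHomology (n : ℤ) :
    DWExtClasses X (shiftC (-n - 1) Y) ≃ homCxHomology X Y n :=
  (dwExtClassesEquivHtpyClasses X _).trans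
    ((htpyClassesCongr (Iso.refl X) (shiftCShiftCIso Y (by ring))).toEquiv.trans
      (homCxHomologyEquivHtpyClassesToShift X Y n).symm.toEquiv)

lemma forall_ker_hδ_le_range_iff :
    (∀ n : ℤ, (hδ X Y n (n - 1)).ker ≤ (hδ X Y (n + 1) n).range) ↔
      ∀ (m : ℤ) (f : shiftC m X ⟶ Y), Nonempty (Homotopy f 0) :=
  forall_congr' fun n => by
    rw [← subsingleton_homCxHomology_iff,
      (homCxHomologyEquivHtpyClassesFromShift X Y n).toEquiv.subsingleton_congr,
      subsingleton_htpyClasses_iff]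

end Assembly

/-- For chain complexes `X, Y` over an abelian category `𝒜` and `n ∈ ℤ`,
`Ext¹_dw(X, Σ^{-n-1} Y) ≅ H_n (Hom(X,Y)) ≅ K(𝒜)(X, Σ^{-n} Y)`; in particular
`Hom(X,Y)` is exact iff every chain map `Σⁿ X → Y` is null homotopic. -/
theorem homcomplex_homology_lemma {𝒜 : Type u} [Category.{v} 𝒜] [Abelian 𝒜]
    (X Y : ChainComplex 𝒜 ℤ) :
    (∀ n : ℤ,
      Nonempty (DWExtClasses X (shiftC (-n - 1) Y) ≃ homCxHomology X Y n) ∧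
      Nonempty (homCxHomology X Y n ≃+ htpyClasses X (shiftC (-n) Y))) ∧
    ((∀ n : ℤ, (hδ X Y n (n - 1)).ker ≤ (hδ X Y (n + 1) n).range) ↔
      ∀ (m : ℤ) (f : shiftC m X ⟶ Y), Nonempty (Homotopy f 0)) :=
  ⟨fun n => ⟨⟨dwExtClassesEquivHomCxHomology X Y n⟩, ⟨homCxHomologyEquivHtpyClassesToShift X Y n⟩⟩,
    forall_ker_hδ_le_range_iff X Y⟩

end GorensteinAC
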